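/- Let (X_n)_{n∈ℤ} be a strictly stationary, strongly mixing sequence of nonnegative random variables such that X_1 is regularly varying with index α > 0, let (a_n) be positive reals with n·P(X_1 > a_n) → 1, and assume (X_n) has extremal index θ = 1, i.e., for every u > 0, P(max_{1≤i≤n} X_i ≤ u·a_n) → exp(−u^{−α}). Then for every k ≥ 1, all times 0 = t_0 < t_1 < t_2 < … < t_k ≤ 1 and all x_1,…,x_k > 0: P( max_{1≤i≤⌊n t_j⌋} X_i ≤ x_j·a_n for all j = 1,…,k ) → ∏_{j=1}^k exp( −(t_j − t_{j−1}) · (min_{j ≤ l ≤ k} x_l)^{−α} ) as n → ∞. -/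

import Mathlib

open MeasureTheory Filter Topology Finset
open scoped Classical

/-- The sequence `(X_i)_{i ∈ ℤ}` is strictly stationary: for every shift `h`, the law
of the shifted sequence equals the law of the sequence. -/
def StrictStationaryZ {Ω : Type*} [MeasurableSpace Ω] (P : Measure Ω)
    (X : ℤ → Ω → ℝ) : Prop :=
  ∀ h : ℤ, P.map (fun ω (i : ℤ) => X (i + h) ω) = P.map (fun ω (i : ℤ) => X i ω)

/-- The sequence `(X_i)_{i ∈ ℤ}` is strongly mixing (α-mixing): there are coefficients
`α_n → 0` bounding `|P(A ∩ B) − P(A)P(B)|` for `A ∈ σ(X_i : i ≤ j)` and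
`B ∈ σ(X_i : i ≥ j + n)`. -/
def StrongMixingZ {Ω : Type*} [MeasurableSpace Ω] (P : Measure Ω)
    (X : ℤ → Ω → ℝ) : Prop :=
  ∃ α : ℕ → ℝ, Tendsto α atTop (𝓝 0) ∧
    ∀ (n : ℕ) (j : ℤ) (A B : Set Ω),
      MeasurableSet[⨆ i ∈ {i : ℤ | i ≤ j}, MeasurableSpace.comap (X i) inferInstance] A →
      MeasurableSet[⨆ i ∈ {i : ℤ | j + (n : ℤ) ≤ i},
        MeasurableSpace.comap (X i) inferInstance] B →
      |(P (A ∩ B)).toReal - (P A).toReal * (P B).toReal| ≤ α n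

/-- A nonnegative random variable `X` is regularly varying with index `α > 0`:
`P(X > x) > 0` for all `x > 0` and `P(X > tx)/P(X > x) → t^(−α)` as `x → ∞`. -/
def RegularlyVaryingRV {Ω : Type*} [MeasurableSpace Ω] (P : Measure Ω)
    (X : Ω → ℝ) (α : ℝ) : Prop :=
  (∀ x : ℝ, 0 < x → 0 < P {ω | x < X ω}) ∧
  ∀ t : ℝ, 0 < t →
    Tendsto (fun x : ℝ => (P {ω | t * x < X ω}).toReal / (P {ω | x < X ω}).toReal)
      atTop (𝓝 (t ^ (-α)))

/-!
Split `[1, ⌊n t_k⌋]` into the blocks `(⌊n t_{j-1}⌋, ⌊n t_j⌋]`; the event is then that the maximum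
over block `j` is at most `(min_{j ≤ l ≤ k} x_l) aₙ`. Removing the last `√n` indices of every block
costs `O(√n P(X₁ > c aₙ)) = o(1)` and leaves gaps of length `√n`, across which strong mixing makes
the blocks asymptotically independent. By stationarity a block of length `≈ s n` behaves like the
first `⌊s n⌋` terms, and since `a_{⌊s n⌋} / aₙ → s^(1/α)` by regular variation, the extremal index
assumption gives `P(max_{i ≤ ⌊s n⌋} X_i ≤ u aₙ) → exp(-s u^(-α))`.
-/

lemma tendsto_zero_of_tendsto_natCast_mul {f : ℕ → ℝ} {L : ℝ}
    (hf : Tendsto (fun n => n * f n) atTop (𝓝 L)) : Tendsto f atTop (𝓝 0) := by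
  have := hf.mul (tendsto_inv_atTop_nhds_zero_nat (𝕜 := ℝ))
  rw [mul_zero] at this
  refine this.congr' ?_
  filter_upwards [eventually_ne_atTop 0] with n hn
  field_simp

lemma tendsto_atTop_of_tendsto_natCast_div {N : ℕ → ℕ} {s : ℝ} (hs : 0 < s)
    (hN : Tendsto (fun n => (N n : ℝ) / n) atTop (𝓝 s)) : Tendsto N atTop atTop :=
  tendsto_natCast_atTop_iff.1 (Tendsto.num tendsto_natCast_atTop_atTop hs hN)

lemma one_lt_mul_rpow_neg_iff {s c α : ℝ} (hs : 0 ≤ s) (hc : 0 < c) (hα : 0 < α) :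
    1 < s * c ^ (-α) ↔ c < s ^ α⁻¹ := by
  rw [Real.rpow_neg hc.le, ← div_eq_mul_inv, one_lt_div (by positivity),
    Real.lt_rpow_inv_iff_of_pos hc.le hs hα]

lemma mul_rpow_neg_lt_one_iff {s c α : ℝ} (hs : 0 ≤ s) (hc : 0 < c) (hα : 0 < α) :
    s * c ^ (-α) < 1 ↔ s ^ α⁻¹ < c := by
  rw [Real.rpow_neg hc.le, ← div_eq_mul_inv, div_lt_one (by positivity),
    Real.rpow_inv_lt_iff_of_pos hs hc.le hα]

/-- Compare `N_n T(a_{N_n}) → 1` with `N_n T(c aₙ) → s c^(-α)`: since `T` is antitone,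
`a_{N_n} > c aₙ` eventually when `s c^(-α) > 1`, and `a_{N_n} < c aₙ` when `s c^(-α) < 1`. -/
lemma tendsto_div_of_antitone {T : ℝ → ℝ} (hT : Antitone T) {α s : ℝ} (hα : 0 < α) (hs : 0 < s)
    {a : ℕ → ℝ} (hapos : ∀ n, 0 < a n)
    (hlim : ∀ c, 0 < c → Tendsto (fun n : ℕ => n * T (c * a n)) atTop (𝓝 (c ^ (-α))))
    {N : ℕ → ℕ} (hN : Tendsto (fun n => (N n : ℝ) / n) atTop (𝓝 s)) :
    Tendsto (fun n => a (N n) / a n) atTop (𝓝 (s ^ α⁻¹)) := by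
  have hself : Tendsto (fun n => (N n : ℝ) * T (a (N n))) atTop (𝓝 1) := by
    simpa [Function.comp_def] using
      (hlim 1 one_pos).comp (tendsto_atTop_of_tendsto_natCast_div hs hN)
  have hscaled : ∀ c, 0 < c →
      Tendsto (fun n => (N n : ℝ) * T (c * a n)) atTop (𝓝 (s * c ^ (-α))) := by
    intro c hc
    refine (hN.mul (hlim c hc)).congr' ?_
    filter_upwards [eventually_ne_atTop 0] with n hn
    field_simp
  have hreflect : ∀ n x y, (N n : ℝ) * T x < N n * T y → y < x := fun n x y h =>
    hT.reflect_lt (lt_of_mul_lt_mul_left h (Nat.cast_nonneg _))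
  refine tendsto_order.2 ⟨fun c hc => ?_, fun c hc => ?_⟩
  · rcases le_or_gt c 0 with hc0 | hc0
    · exact Eventually.of_forall fun n => hc0.trans_lt (div_pos (hapos _) (hapos n))
    have hlt := (one_lt_mul_rpow_neg_iff hs.le hc0 hα).2 hc
    filter_upwards [hself.eventually_lt (hscaled c hc0) hlt] with n hn
    exact (lt_div_iff₀ (hapos n)).2 (hreflect n _ _ hn)
  · have hc0 : 0 < c := (Real.rpow_pos_of_pos hs _).trans hc
    have hlt := (mul_rpow_neg_lt_one_iff hs.le hc0 hα).2 hc
    filter_upwards [(hscaled c hc0).eventually_lt hself hlt] with n hn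
    exact (div_lt_iff₀ (hapos n)).2 (hreflect n _ _ hn)

/-- Pointwise convergence of monotone functions to a limit continuous at `v₀` is locally
uniform there, so it survives a moving argument `vᵢ → v₀`. -/
lemma Filter.Tendsto.apply_of_monotone {ι : Type*} {l : Filter ι} {F : ι → ℝ → ℝ}
    {G : ℝ → ℝ} {v : ι → ℝ} {v₀ : ℝ} (hF : ∀ i, Monotone (F i))
    (hconv : ∀ᶠ w in 𝓝 v₀, Tendsto (fun i => F i w) l (𝓝 (G w))) (hG : ContinuousAt G v₀)
    (hv : Tendsto v l (𝓝 v₀)) : Tendsto (fun i => F i (v i)) l (𝓝 (G v₀)) := by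
  refine tendsto_order.2 ⟨fun b hb => ?_, fun b hb => ?_⟩
  · obtain ⟨w, ⟨hbw, hw⟩, hwv : w < v₀⟩ :=
      (((hG.eventually (lt_mem_nhds hb)).and hconv).filter_mono nhdsWithin_le_nhds).and
        (self_mem_nhdsWithin (s := Set.Iio v₀)) |>.exists
    filter_upwards [hw.eventually (lt_mem_nhds hbw), hv.eventually (lt_mem_nhds hwv)] with i h1 h2
    exact h1.trans_le (hF i h2.le)
  · obtain ⟨w, ⟨hbw, hw⟩, hwv : v₀ < w⟩ :=
      (((hG.eventually (gt_mem_nhds hb)).and hconv).filter_mono nhdsWithin_le_nhds).and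
        (self_mem_nhdsWithin (s := Set.Ioi v₀)) |>.exists
    filter_upwards [hw.eventually (gt_mem_nhds hbw), hv.eventually (gt_mem_nhds hwv)] with i h1 h2
    exact (hF i h2.le).trans_lt h1

lemma tendsto_nat_sqrt_atTop : Tendsto Nat.sqrt atTop atTop :=
  tendsto_atTop.2 fun b => (eventually_ge_atTop (b * b)).mono fun _ => Nat.le_sqrt.2

lemma tendsto_nat_sqrt_div_atTop : Tendsto (fun n : ℕ => (Nat.sqrt n : ℝ) / n) atTop (𝓝 0) := by
  refine squeeze_zero (fun n => by positivity) (fun n => ?_)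
    (tendsto_inv_atTop_zero.comp (Real.tendsto_sqrt_atTop.comp tendsto_natCast_atTop_atTop))
  calc (Nat.sqrt n : ℝ) / n ≤ √(n : ℝ) / n := by gcongr; exact Real.nat_sqrt_le_real_sqrt
    _ = (√(n : ℝ))⁻¹ := Real.sqrt_div_self

lemma tendsto_natFloor_mul_div {t : ℝ} (ht : 0 ≤ t) :
    Tendsto (fun n : ℕ => (⌊(n : ℝ) * t⌋₊ : ℝ) / n) atTop (𝓝 t) := by
  simpa [mul_comm, Function.comp_def] using
    (tendsto_nat_floor_mul_div_atTop ht).comp tendsto_natCast_atTop_atTop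

lemma tendsto_natFloor_mul_sub_div {t t' : ℝ} (ht' : 0 ≤ t') (h : t' ≤ t) :
    Tendsto (fun n : ℕ => ((⌊(n : ℝ) * t⌋₊ - ⌊(n : ℝ) * t'⌋₊ : ℕ) : ℝ) / n) atTop (𝓝 (t - t')) :=
  ((tendsto_natFloor_mul_div (ht'.trans h)).sub (tendsto_natFloor_mul_div ht')).congr fun n => by
    rw [Nat.cast_sub (Nat.floor_mono (by gcongr)), sub_div]

lemma Finset.prod_sub_prod_le_sum_sub {ι : Type*} (s : Finset ι) {f g : ι → ℝ}
    (hg : ∀ i ∈ s, 0 ≤ g i) (hgf : ∀ i ∈ s, g i ≤ f i) (hf : ∀ i ∈ s, f i ≤ 1) :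
    ∏ i ∈ s, f i - ∏ i ∈ s, g i ≤ ∑ i ∈ s, (f i - g i) := by
  induction s using Finset.cons_induction with
  | empty => simp
  | cons a s ha ih =>
    simp only [Finset.forall_mem_cons] at hg hgf hf
    rw [Finset.prod_cons, Finset.prod_cons, Finset.sum_cons]
    have hgs : 0 ≤ ∏ i ∈ s, g i := Finset.prod_nonneg hg.2
    have hgfs : ∏ i ∈ s, g i ≤ ∏ i ∈ s, f i := Finset.prod_le_prod hg.2 hgf.2
    have hfs : ∏ i ∈ s, f i ≤ 1 :=
      Finset.prod_le_one (fun i hi => (hg.2 i hi).trans (hgf.2 i hi)) hf.2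
    have := ih hg.2 hgf.2 hf.2
    nlinarith [hg.1, hgf.1, hf.1]

section Blocks

variable {Ω : Type*} {X : ℤ → Ω → ℝ}

def blockMaxLe (X : ℤ → Ω → ℝ) (S : Finset ℕ) (c : ℝ) : Set Ω :=
  {ω | ∀ i ∈ S, X i ω ≤ c}

lemma blockMaxLe_anti {S S' : Finset ℕ} (h : S ⊆ S') (c : ℝ) :
    blockMaxLe X S' c ⊆ blockMaxLe X S c :=
  fun _ hω i hi => hω i (h hi)

lemma blockMaxLe_diff_subset (S S' : Finset ℕ) (c : ℝ) :
    blockMaxLe X S c \ blockMaxLe X S' c ⊆ ⋃ i ∈ S' \ S, {ω | c < X i ω} := by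
  rintro ω ⟨hS, hS'⟩
  simp only [blockMaxLe, Set.mem_ofPred_eq, not_forall, not_le] at hS'
  obtain ⟨i, hi, hlt⟩ := hS'
  exact Set.mem_biUnion (Finset.mem_sdiff.2 ⟨hi, fun h => (hS i h).not_gt hlt⟩) hlt

abbrev sigmaOn (X : ℤ → Ω → ℝ) (I : Set ℤ) : MeasurableSpace Ω :=
  ⨆ i ∈ I, MeasurableSpace.comap (X i) inferInstance

lemma measurableSet_sigmaOn_blockMaxLe (X : ℤ → Ω → ℝ) {I : Set ℤ} {S : Finset ℕ}
    (hS : ∀ i ∈ S, (i : ℤ) ∈ I) (c : ℝ) : MeasurableSet[sigmaOn X I] (blockMaxLe X S c) := by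
  have : blockMaxLe X S c = ⋂ i ∈ S, X i ⁻¹' Set.Iic c := by ext; simp [blockMaxLe]
  rw [this]
  refine @Finset.measurableSet_biInter _ _ (sigmaOn X I) _ _ fun i hi => ?_
  exact le_biSup (fun i => MeasurableSpace.comap (X i) inferInstance) (hS i hi) _
    ⟨Set.Iic c, measurableSet_Iic, rfl⟩

end Blocks

noncomputable def tailMin (x : ℕ → ℝ) (k j : ℕ) : ℝ :=
  sInf {y : ℝ | ∃ l : ℕ, j ≤ l ∧ l ≤ k ∧ y = x l}

lemma tailMin_eq_sInf_image (x : ℕ → ℝ) (k j : ℕ) : tailMin x k j = sInf (x '' Set.Icc j k) := by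
  unfold tailMin
  congr 1
  ext y
  simp only [Set.mem_image, Set.mem_Icc]
  constructor
  · rintro ⟨l, hjl, hlk, rfl⟩; exact ⟨l, ⟨hjl, hlk⟩, rfl⟩
  · rintro ⟨l, ⟨hjl, hlk⟩, rfl⟩; exact ⟨l, hjl, hlk, rfl⟩

lemma exists_tailMin_eq (x : ℕ → ℝ) {k j : ℕ} (hjk : j ≤ k) :
    ∃ l, j ≤ l ∧ l ≤ k ∧ tailMin x k j = x l := by
  obtain ⟨l, ⟨hjl, hlk⟩, hl⟩ := (Set.nonempty_Icc.2 hjk).image x |>.csInf_mem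
    ((Set.finite_Icc j k).image x)
  exact ⟨l, hjl, hlk, by rw [tailMin_eq_sInf_image, hl]⟩

lemma tailMin_le (x : ℕ → ℝ) {k j l : ℕ} (hjl : j ≤ l) (hlk : l ≤ k) : tailMin x k j ≤ x l := by
  rw [tailMin_eq_sInf_image]
  exact csInf_le ((Set.finite_Icc j k).image x).bddBelow ⟨l, ⟨hjl, hlk⟩, rfl⟩

lemma tailMin_pos {x : ℕ → ℝ} {k j : ℕ} (hjk : j ≤ k) (hx : ∀ l, j ≤ l → l ≤ k → 0 < x l) :
    0 < tailMin x k j := by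
  obtain ⟨l, hjl, hlk, hl⟩ := exists_tailMin_eq x hjk
  exact hl ▸ hx l hjl hlk

lemma exists_mem_Ioc_of_le {N : ℕ → ℕ} (hN0 : N 0 = 0) {i j : ℕ} (hi : 1 ≤ i) (hij : i ≤ N j) :
    ∃ j', 1 ≤ j' ∧ j' ≤ j ∧ N (j' - 1) < i ∧ i ≤ N j' := by
  classical
  have hex : ∃ j', i ≤ N j' := ⟨j, hij⟩
  have hpos : Nat.find hex ≠ 0 := fun h => by
    have := Nat.find_spec hex
    rw [h, hN0] at this
    omega
  exact ⟨Nat.find hex, by omega, Nat.find_min' hex hij,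
    not_le.1 (Nat.find_min hex (by omega)), Nat.find_spec hex⟩

lemma setOf_forall_Icc_eq_iInter_blockMaxLe {Ω : Type*} (X : ℤ → Ω → ℝ) (k : ℕ) {N : ℕ → ℕ}
    (hN0 : N 0 = 0) (hN : MonotoneOn N (Set.Iic k)) (x : ℕ → ℝ) {c : ℝ} (hc : 0 ≤ c) :
    {ω | ∀ j ∈ Icc 1 k, ∀ i ∈ Icc 1 (N j), X i ω ≤ x j * c} =
      ⋂ j ∈ Icc 1 k, blockMaxLe X (Ioc (N (j - 1)) (N j)) (tailMin x k j * c) := by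
  ext ω
  simp only [Set.mem_iInter, blockMaxLe, Finset.mem_Icc, Finset.mem_Ioc, Set.mem_ofPred_eq]
  constructor
  · intro H j hj i hi
    obtain ⟨l, hjl, hlk, hl⟩ := exists_tailMin_eq x hj.2
    rw [hl]
    exact H l ⟨hj.1.trans hjl, hlk⟩ i
      ⟨by omega, hi.2.trans (hN (Set.mem_Iic.2 hj.2) (Set.mem_Iic.2 hlk) hjl)⟩
  · intro H j hj i hi
    obtain ⟨j', hj'1, hj'j, hlow, hhigh⟩ := exists_mem_Ioc_of_le hN0 hi.1 hi.2
    exact (H j' ⟨hj'1, hj'j.trans hj.2⟩ i ⟨hlow, hhigh⟩).trans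
      (mul_le_mul_of_nonneg_right (tailMin_le x hj'j hj.2) hc)

section Stationarity

variable {Ω : Type*} [MeasurableSpace Ω] {P : Measure Ω} {X : ℤ → Ω → ℝ}

lemma StrictStationaryZ.measure_preimage (hmeas : ∀ i, Measurable (X i))
    (hstat : StrictStationaryZ P X) (h : ℤ) {s : Set (ℤ → ℝ)} (hs : MeasurableSet s) :
    P ((fun ω i => X (i + h) ω) ⁻¹' s) = P ((fun ω i => X i ω) ⁻¹' s) := by
  have := congrArg (· s) (hstat h)
  rwa [Measure.map_apply (measurable_pi_lambda _ fun i => hmeas _) hs,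
    Measure.map_apply (measurable_pi_lambda _ fun i => hmeas _) hs] at this

lemma StrictStationaryZ.measure_lt (hmeas : ∀ i, Measurable (X i))
    (hstat : StrictStationaryZ P X) (i : ℤ) (u : ℝ) :
    P {ω | u < X i ω} = P {ω | u < X 1 ω} := by
  simpa using hstat.measure_preimage hmeas (i - 1) (s := {f | u < f 1})
    (measurableSet_lt measurable_const (measurable_pi_apply 1))

lemma StrictStationaryZ.measure_blockMaxLe_map (hmeas : ∀ i, Measurable (X i))
    (hstat : StrictStationaryZ P X) (S : Finset ℕ) (b : ℕ) (c : ℝ) :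
    P (blockMaxLe X (S.map (addRightEmbedding b)) c) = P (blockMaxLe X S c) := by
  have hs : MeasurableSet {f : ℤ → ℝ | ∀ i ∈ S, f i ≤ c} := by
    simp only [Set.ofPred_forall]
    exact Finset.measurableSet_biInter S fun i _ =>
      measurableSet_le (measurable_pi_apply _) measurable_const
  simpa [blockMaxLe] using hstat.measure_preimage hmeas b hs

lemma StrictStationaryZ.measureReal_blockMaxLe_Ioc (hmeas : ∀ i, Measurable (X i))
    (hstat : StrictStationaryZ P X) {b b' : ℕ} (hb : b ≤ b') (c : ℝ) :
    P.real (blockMaxLe X (Ioc b b') c) = P.real (blockMaxLe X (Icc 1 (b' - b)) c) := by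
  have := hstat.measure_blockMaxLe_map hmeas (Ioc 0 (b' - b)) b c
  rw [Finset.map_add_right_Ioc, zero_add, Nat.sub_add_cancel hb] at this
  rw [measureReal_def, measureReal_def, this, ← Finset.Icc_add_one_left_eq_Ioc, zero_add]

end Stationarity

section Mixing

variable {Ω : Type*} [MeasurableSpace Ω] {P : Measure Ω} [IsProbabilityMeasure P]

lemma abs_measureReal_biInter_sub_prod_le (𝓕 𝓖 : ℤ → MeasurableSpace Ω)
    {c : ℝ} (hbd : ∀ (j : ℤ) (A B : Set Ω), MeasurableSet[𝓕 j] A → MeasurableSet[𝓖 j] B →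
      |P.real (A ∩ B) - P.real A * P.real B| ≤ c)
    (A : ℕ → Set Ω) (b : ℕ → ℤ) (K : ℕ)
    (hpast : ∀ r r', 1 ≤ r → r ≤ r' → r' ≤ K → MeasurableSet[𝓕 (b r')] (A r))
    (hfut : ∀ r < K, MeasurableSet[𝓖 (b r)] (A (r + 1))) :
    |P.real (⋂ r ∈ Icc 1 K, A r) - ∏ r ∈ Icc 1 K, P.real (A r)| ≤ K * c := by
  induction K with
  | zero => simp
  | succ K ih =>
    set I := ⋂ r ∈ Icc 1 K, A r
    have hI : MeasurableSet[𝓕 (b K)] I :=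
      @Finset.measurableSet_biInter _ _ (𝓕 (b K)) _ _ fun r hr =>
        hpast r K (Finset.mem_Icc.1 hr).1 (Finset.mem_Icc.1 hr).2 (by omega)
    have hmix := hbd (b K) I (A (K + 1)) hI (hfut K (by omega))
    have hprev := ih (fun r r' h1 h2 h3 => hpast r r' h1 h2 (by omega))
      (fun r hr => hfut r (by omega))
    have hB : P.real (A (K + 1)) ≤ 1 := measureReal_le_one
    rw [← Finset.insert_Icc_right_eq_Icc_add_one (by omega), Finset.set_biInter_insert,
      Finset.prod_insert (by simp), Set.inter_comm]
    have hfactor : P.real I * P.real (A (K + 1)) -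
        P.real (A (K + 1)) * ∏ r ∈ Icc 1 K, P.real (A r) =
        P.real (A (K + 1)) * (P.real I - ∏ r ∈ Icc 1 K, P.real (A r)) := by ring
    calc |P.real (I ∩ A (K + 1)) - P.real (A (K + 1)) * ∏ r ∈ Icc 1 K, P.real (A r)|
        ≤ |P.real (I ∩ A (K + 1)) - P.real I * P.real (A (K + 1))|
          + |P.real I * P.real (A (K + 1)) - P.real (A (K + 1)) * ∏ r ∈ Icc 1 K, P.real (A r)| :=
          abs_sub_le _ _ _
      _ = |P.real (I ∩ A (K + 1)) - P.real I * P.real (A (K + 1))|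
          + P.real (A (K + 1)) * |P.real I - ∏ r ∈ Icc 1 K, P.real (A r)| := by
          rw [hfactor, abs_mul, abs_of_nonneg measureReal_nonneg]
      _ ≤ c + 1 * (K * c) := by gcongr
      _ = (K + 1 : ℕ) * c := by push_cast; ring

end Mixing

section Trimming

variable {Ω ι : Type*} [MeasurableSpace Ω] {P : Measure Ω} [IsProbabilityMeasure P]

lemma abs_measureReal_biInter_sub_prod_le_of_subset (s : Finset ι) {E E' : ι → Set Ω}
    (hE : ∀ i ∈ s, E i ⊆ E' i) :
    |P.real (⋂ i ∈ s, E i) - ∏ i ∈ s, P.real (E i)| ≤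
      |P.real (⋂ i ∈ s, E' i) - ∏ i ∈ s, P.real (E' i)|
        + 2 * ∑ i ∈ s, P.real (E' i \ E i) := by
  have hinter_le : P.real (⋂ i ∈ s, E i) ≤ P.real (⋂ i ∈ s, E' i) :=
    measureReal_mono (Set.iInter₂_mono hE)
  have hinter_ge : P.real (⋂ i ∈ s, E' i) ≤
      P.real (⋂ i ∈ s, E i) + ∑ i ∈ s, P.real (E' i \ E i) := by
    have hsub : ⋂ i ∈ s, E' i ⊆ (⋂ i ∈ s, E i) ∪ ⋃ i ∈ s, (E' i \ E i) := by
      intro ω hω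
      by_cases h : ∀ i ∈ s, ω ∈ E i
      · exact Or.inl (Set.mem_iInter₂.2 h)
      · simp only [not_forall] at h
        obtain ⟨i, hi, hωi⟩ := h
        exact Or.inr (Set.mem_biUnion hi ⟨Set.mem_iInter₂.1 hω i hi, hωi⟩)
    calc P.real (⋂ i ∈ s, E' i) ≤ P.real ((⋂ i ∈ s, E i) ∪ ⋃ i ∈ s, (E' i \ E i)) :=
          measureReal_mono hsub
      _ ≤ P.real (⋂ i ∈ s, E i) + P.real (⋃ i ∈ s, (E' i \ E i)) := measureReal_union_le _ _
      _ ≤ _ := by gcongr; exact measureReal_biUnion_finset_le _ _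
  have hprod_le : ∏ i ∈ s, P.real (E i) ≤ ∏ i ∈ s, P.real (E' i) :=
    Finset.prod_le_prod (fun _ _ => measureReal_nonneg) fun i hi => measureReal_mono (hE i hi)
  have hprod_ge : ∏ i ∈ s, P.real (E' i) - ∏ i ∈ s, P.real (E i) ≤
      ∑ i ∈ s, P.real (E' i \ E i) := by
    refine (Finset.prod_sub_prod_le_sum_sub s (fun _ _ => measureReal_nonneg)
      (fun i hi => measureReal_mono (hE i hi)) fun _ _ => measureReal_le_one).trans ?_
    refine Finset.sum_le_sum fun i hi => ?_
    have := measureReal_union_le (μ := P) (E i) (E' i \ E i)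
    rw [Set.union_sdiff_cancel (hE i hi)] at this
    linarith
  rw [abs_le]
  constructor <;> linarith [le_abs_self (P.real (⋂ i ∈ s, E' i) - ∏ i ∈ s, P.real (E' i)),
    neg_abs_le (P.real (⋂ i ∈ s, E' i) - ∏ i ∈ s, P.real (E' i))]

end Trimming

section BlockIndependence

variable {Ω : Type*} [MeasurableSpace Ω] {P : Measure Ω} [IsProbabilityMeasure P]
  {X : ℤ → Ω → ℝ}

lemma measureReal_blockMaxLe_diff_le (hmeas : ∀ i, Measurable (X i))
    (hstat : StrictStationaryZ P X) (S S' : Finset ℕ) (c : ℝ) :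
    P.real (blockMaxLe X S c \ blockMaxLe X S' c) ≤ (S' \ S).card * P.real {ω | c < X 1 ω} :=
  calc P.real (blockMaxLe X S c \ blockMaxLe X S' c)
      ≤ P.real (⋃ i ∈ S' \ S, {ω | c < X i ω}) :=
        measureReal_mono (blockMaxLe_diff_subset S S' c) (measure_ne_top _ _)
    _ ≤ ∑ i ∈ S' \ S, P.real {ω | c < X i ω} := measureReal_biUnion_finset_le _ _
    _ = (S' \ S).card * P.real {ω | c < X 1 ω} := by
      simp [measureReal_def, hstat.measure_lt hmeas]

/-- Removing the last `ℓ` indices of every block separates consecutive blocks by a gap of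
`ℓ + 1`, so that the mixing bound applies; the removed indices cost at most `ℓ` exceedances
per block. -/
lemma abs_measureReal_iInter_blockMaxLe_sub_prod_le (hmeas : ∀ i, Measurable (X i))
    (hstat : StrictStationaryZ P X) {c : ℝ} {ℓ : ℕ}
    (hbd : ∀ (j : ℤ) (A B : Set Ω), MeasurableSet[sigmaOn X (Set.Iic j)] A →
      MeasurableSet[sigmaOn X (Set.Ici (j + (ℓ + 1 : ℕ)))] B →
      |P.real (A ∩ B) - P.real A * P.real B| ≤ c)
    (k : ℕ) (N : ℕ → ℕ) (hN : MonotoneOn N (Set.Iic k)) (u : ℕ → ℝ) :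
    |P.real (⋂ j ∈ Icc 1 k, blockMaxLe X (Ioc (N (j - 1)) (N j)) (u j))
        - ∏ j ∈ Icc 1 k, P.real (blockMaxLe X (Ioc (N (j - 1)) (N j)) (u j))|
      ≤ k * c + 2 * ∑ j ∈ Icc 1 k, ℓ * P.real {ω | u j < X 1 ω} := by
  set E' := fun j => blockMaxLe X (Ioc (N (j - 1)) (N j - ℓ)) (u j)
  have hchain := abs_measureReal_biInter_sub_prod_le (P := P) (fun j => sigmaOn X (Set.Iic j))
    (fun j => sigmaOn X (Set.Ici (j + (ℓ + 1 : ℕ)))) hbd E' (fun j => (N j : ℤ) - ℓ) k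
    (fun r r' _ hrr' hr' => measurableSet_sigmaOn_blockMaxLe X (fun i hi => by
      have := hN (Set.mem_Iic.2 (hrr'.trans hr')) (Set.mem_Iic.2 hr') hrr'
      simp only [Finset.mem_Ioc] at hi
      simp only [Set.mem_Iic]
      omega) _)
    (fun r _ => measurableSet_sigmaOn_blockMaxLe X (fun i hi => by
      simp only [Finset.mem_Ioc, Nat.add_sub_cancel] at hi
      simp only [Set.mem_Ici]
      push_cast
      omega) _)
  have hgap : ∀ j ∈ Icc 1 k, P.real (E' j \ blockMaxLe X (Ioc (N (j - 1)) (N j)) (u j))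
      ≤ ℓ * P.real {ω | u j < X 1 ω} := by
    intro j _
    refine (measureReal_blockMaxLe_diff_le hmeas hstat _ _ _).trans ?_
    gcongr
    calc (Ioc (N (j - 1)) (N j) \ Ioc (N (j - 1)) (N j - ℓ)).card
        ≤ (Ioc (N j - ℓ) (N j)).card := by
          gcongr
          intro i
          simp only [Finset.mem_sdiff, Finset.mem_Ioc]
          omega
      _ ≤ ℓ := by rw [Nat.card_Ioc]; omega
  calc _ ≤ |P.real (⋂ j ∈ Icc 1 k, E' j) - ∏ j ∈ Icc 1 k, P.real (E' j)|
        + 2 * ∑ j ∈ Icc 1 k, P.real (E' j \ blockMaxLe X (Ioc (N (j - 1)) (N j)) (u j)) :=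
        abs_measureReal_biInter_sub_prod_le_of_subset _ fun j _ =>
          blockMaxLe_anti (Finset.Ioc_subset_Ioc_right (Nat.sub_le _ _)) _
    _ ≤ _ := by gcongr with j hj; exact hgap j hj

end BlockIndependence

lemma tendsto_measureReal_iInter_blockMaxLe_sub_prod {Ω : Type*} [MeasurableSpace Ω]
    {P : Measure Ω} [IsProbabilityMeasure P] {X : ℤ → Ω → ℝ} (hmeas : ∀ i, Measurable (X i))
    (hstat : StrictStationaryZ P X) (hmix : StrongMixingZ P X) (k : ℕ) (N : ℕ → ℕ → ℕ)
    (hN : ∀ n, MonotoneOn (N · n) (Set.Iic k)) (u : ℕ → ℕ → ℝ) {ℓ : ℕ → ℕ}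
    (hℓ : Tendsto ℓ atTop atTop)
    (hgap : ∀ j ∈ Icc 1 k, Tendsto (fun n => ℓ n * P.real {ω | u j n < X 1 ω}) atTop (𝓝 0)) :
    Tendsto (fun n => P.real (⋂ j ∈ Icc 1 k, blockMaxLe X (Ioc (N (j - 1) n) (N j n)) (u j n))
        - ∏ j ∈ Icc 1 k, P.real (blockMaxLe X (Ioc (N (j - 1) n) (N j n)) (u j n)))
      atTop (𝓝 0) := by
  obtain ⟨αc, hαc, hbd⟩ := hmix
  have hbound : Tendsto (fun n => k * αc (ℓ n + 1)
      + 2 * ∑ j ∈ Icc 1 k, ℓ n * P.real {ω | u j n < X 1 ω}) atTop (𝓝 0) := by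
    simpa using ((hαc.comp (tendsto_atTop_mono (fun n => Nat.le_succ _) hℓ)).const_mul (k : ℝ)).add
      ((tendsto_finsetSum _ hgap).const_mul 2)
  refine squeeze_zero_norm (fun n => ?_) hbound
  exact abs_measureReal_iInter_blockMaxLe_sub_prod_le hmeas hstat
    (fun j A B => hbd (ℓ n + 1) j A B) k (N · n) (hN n) _

section Tail

variable {Ω : Type*} [MeasurableSpace Ω] {P : Measure Ω} [IsFiniteMeasure P] {Y : Ω → ℝ}
  {α : ℝ} {a : ℕ → ℝ}

lemma antitone_measureReal_lt : Antitone fun x => P.real {ω | x < Y ω} :=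
  fun _ _ hxy => measureReal_mono fun _ hω => hxy.trans_lt hω

lemma tendsto_atTop_of_tendsto_natCast_mul_tail (hY : ∀ x, 0 < x → 0 < P {ω | x < Y ω})
    (han : Tendsto (fun n : ℕ => n * P.real {ω | a n < Y ω}) atTop (𝓝 1)) :
    Tendsto a atTop atTop := by
  refine tendsto_atTop.2 fun b => ?_
  have hb : 0 < P.real {ω | max b 1 < Y ω} :=
    ENNReal.toReal_pos (hY _ (by positivity)).ne' (measure_ne_top _ _)
  filter_upwards [(tendsto_zero_of_tendsto_natCast_mul han).eventually (eventually_lt_nhds hb)]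
    with n hn
  exact (le_max_left b 1).trans (antitone_measureReal_lt.reflect_lt hn).le

lemma RegularlyVaryingRV.tendsto_natCast_mul_tail (hrv : RegularlyVaryingRV P Y α)
    (hapos : ∀ n, 0 < a n)
    (han : Tendsto (fun n : ℕ => n * P.real {ω | a n < Y ω}) atTop (𝓝 1)) {c : ℝ} (hc : 0 < c) :
    Tendsto (fun n : ℕ => n * P.real {ω | c * a n < Y ω}) atTop (𝓝 (c ^ (-α))) := by
  have hratio := (hrv.2 c hc).comp (tendsto_atTop_of_tendsto_natCast_mul_tail hrv.1 han)
  have := han.mul hratio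
  rw [one_mul] at this
  refine this.congr fun n => ?_
  have hpos : P.real {ω | a n < Y ω} ≠ 0 :=
    (ENNReal.toReal_pos (hrv.1 _ (hapos n)).ne' (measure_ne_top _ _)).ne'
  simp only [Function.comp_apply, measureReal_def] at hpos ⊢
  field_simp

end Tail

lemma tendsto_measureReal_blockMaxLe_Icc {Ω : Type*} [MeasurableSpace Ω] {P : Measure Ω}
    [IsFiniteMeasure P] {X : ℤ → Ω → ℝ} {α : ℝ} (hα : 0 < α) {a : ℕ → ℝ} (hapos : ∀ n, 0 < a n)
    (hei : ∀ u, 0 < u → Tendsto (fun n => P.real (blockMaxLe X (Icc 1 n) (u * a n))) atTop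
      (𝓝 (Real.exp (-u ^ (-α)))))
    {N : ℕ → ℕ} (hNtop : Tendsto N atTop atTop) {s : ℝ} (hs : 0 < s)
    (hratio : Tendsto (fun n => a (N n) / a n) atTop (𝓝 (s ^ α⁻¹))) {u : ℝ} (hu : 0 < u) :
    Tendsto (fun n => P.real (blockMaxLe X (Icc 1 (N n)) (u * a n))) atTop
      (𝓝 (Real.exp (-s * u ^ (-α)))) := by
  have hs' : 0 < s ^ α⁻¹ := Real.rpow_pos_of_pos hs _
  have hv₀ : 0 < u / s ^ α⁻¹ := div_pos hu hs'
  have hmono : ∀ n, Monotone fun w => P.real (blockMaxLe X (Icc 1 (N n)) (w * a (N n))) :=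
    fun n _ _ hw => measureReal_mono fun _ hω i hi =>
      (hω i hi).trans (mul_le_mul_of_nonneg_right hw (hapos _).le)
  have hconv : ∀ᶠ w in 𝓝 (u / s ^ α⁻¹), Tendsto
      (fun n => P.real (blockMaxLe X (Icc 1 (N n)) (w * a (N n)))) atTop
      (𝓝 (Real.exp (-w ^ (-α)))) := by
    filter_upwards [eventually_gt_nhds hv₀] with w hw
    exact (hei w hw).comp hNtop
  have hG : ContinuousAt (fun w => Real.exp (-w ^ (-α))) (u / s ^ α⁻¹) :=
    (Real.continuousAt_rpow_const _ _ (Or.inl hv₀.ne')).neg.rexp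
  have hv : Tendsto (fun n => u / (a (N n) / a n)) atTop (𝓝 (u / s ^ α⁻¹)) :=
    tendsto_const_nhds.div hratio hs'.ne'
  have hlim : -(u / s ^ α⁻¹) ^ (-α) = -s * u ^ (-α) := by
    rw [Real.div_rpow hu.le hs'.le, ← Real.rpow_mul hs.le, inv_mul_eq_div, neg_div,
      div_self hα.ne', Real.rpow_neg_one, div_inv_eq_mul, mul_comm, neg_mul]
  rw [← hlim]
  refine (hv.apply_of_monotone hmono hconv hG).congr fun n => ?_
  have := (hapos n).ne'
  have := (hapos (N n)).ne'
  congr 2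
  field_simp

theorem tendsto_measureReal_iInter_blockMaxLe {Ω : Type*} [MeasurableSpace Ω] {P : Measure Ω}
    [IsProbabilityMeasure P] {X : ℤ → Ω → ℝ} (hmeas : ∀ i, Measurable (X i))
    (hstat : StrictStationaryZ P X) (hmix : StrongMixingZ P X) {α : ℝ} (hα : 0 < α)
    (hrv : RegularlyVaryingRV P (X 1) α) {a : ℕ → ℝ} (hapos : ∀ n, 0 < a n)
    (han : Tendsto (fun n : ℕ => n * P.real {ω | a n < X 1 ω}) atTop (𝓝 1))
    (hei : ∀ u, 0 < u → Tendsto (fun n => P.real (blockMaxLe X (Icc 1 n) (u * a n))) atTop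
      (𝓝 (Real.exp (-u ^ (-α)))))
    (k : ℕ) (N : ℕ → ℕ → ℕ) (hN : ∀ n, MonotoneOn (N · n) (Set.Iic k)) {s m : ℕ → ℝ}
    (hs : ∀ j ∈ Icc 1 k, 0 < s j)
    (hNs : ∀ j ∈ Icc 1 k, Tendsto (fun n => ((N j n - N (j - 1) n : ℕ) : ℝ) / n) atTop (𝓝 (s j)))
    (hm : ∀ j ∈ Icc 1 k, 0 < m j) :
    Tendsto (fun n => P.real (⋂ j ∈ Icc 1 k, blockMaxLe X (Ioc (N (j - 1) n) (N j n)) (m j * a n)))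
      atTop (𝓝 (∏ j ∈ Icc 1 k, Real.exp (-s j * m j ^ (-α)))) := by
  have htail : ∀ c, 0 < c → Tendsto (fun n : ℕ => n * P.real {ω | c * a n < X 1 ω}) atTop
      (𝓝 (c ^ (-α))) := fun c hc => hrv.tendsto_natCast_mul_tail hapos han hc
  have hblock : ∀ j ∈ Icc 1 k, Tendsto
      (fun n => P.real (blockMaxLe X (Ioc (N (j - 1) n) (N j n)) (m j * a n))) atTop
      (𝓝 (Real.exp (-s j * m j ^ (-α)))) := by
    intro j hj
    have hjk : j ≤ k := (Finset.mem_Icc.1 hj).2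
    simp_rw [fun n => hstat.measureReal_blockMaxLe_Ioc hmeas
      (hN n (Set.mem_Iic.2 (by omega)) (Set.mem_Iic.2 hjk) (Nat.sub_le j 1)) (m j * a n)]
    exact tendsto_measureReal_blockMaxLe_Icc hα hapos hei
      (tendsto_atTop_of_tendsto_natCast_div (hs j hj) (hNs j hj)) (hs j hj)
      (tendsto_div_of_antitone antitone_measureReal_lt hα (hs j hj) hapos htail (hNs j hj))
      (hm j hj)
  have hgap : ∀ j ∈ Icc 1 k, Tendsto
      (fun n => Nat.sqrt n * P.real {ω | m j * a n < X 1 ω}) atTop (𝓝 0) := by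
    intro j hj
    refine (zero_mul (m j ^ (-α)) ▸ tendsto_nat_sqrt_div_atTop.mul (htail _ (hm j hj))).congr' ?_
    filter_upwards [eventually_ne_atTop 0] with n hn
    field_simp
  simpa using (tendsto_measureReal_iInter_blockMaxLe_sub_prod hmeas hstat hmix k N hN
    (fun j n => m j * a n) tendsto_nat_sqrt_atTop hgap).add (tendsto_finsetProd _ hblock)

theorem partial_maxima_fdd_convergence_general
    {Ω : Type*} [MeasurableSpace Ω] (P : Measure Ω) [IsProbabilityMeasure P]
    (X : ℤ → Ω → ℝ) (hmeas : ∀ i, Measurable (X i))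
    (hstat : StrictStationaryZ P X) (hmix : StrongMixingZ P X)
    (α : ℝ) (hα : 0 < α) (hrv : RegularlyVaryingRV P (X 1) α)
    (a : ℕ → ℝ) (hapos : ∀ n, 0 < a n)
    (han : Tendsto (fun n : ℕ => (n : ℝ) * (P {ω | a n < X 1 ω}).toReal) atTop (𝓝 1))
    (hei : ∀ u : ℝ, 0 < u →
      Tendsto (fun n : ℕ =>
          (P {ω | ∀ i ∈ Finset.Icc 1 n, X (i : ℤ) ω ≤ u * a n}).toReal)
        atTop (𝓝 (Real.exp (-u ^ (-α))))) :
    ∀ k : ℕ, 1 ≤ k → ∀ t x : ℕ → ℝ, t 0 = 0 →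
      (∀ j, 1 ≤ j → j ≤ k → t (j - 1) < t j) → t k ≤ 1 →
      (∀ j, 1 ≤ j → j ≤ k → 0 < x j) →
      Tendsto (fun n : ℕ =>
        (P {ω | ∀ j ∈ Finset.Icc 1 k, ∀ i ∈ Finset.Icc 1 ⌊(n : ℝ) * t j⌋₊,
            X (i : ℤ) ω ≤ x j * a n}).toReal)
        atTop
        (𝓝 (∏ j ∈ Finset.Icc 1 k,
          Real.exp (-(t j - t (j - 1)) *
            (sInf {y : ℝ | ∃ l : ℕ, j ≤ l ∧ l ≤ k ∧ y = x l}) ^ (-α)))) := by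
  intro k _ t x ht0 hord _ hx
  have ht : MonotoneOn t (Set.Iic k) :=
    (strictMonoOn_Iic_of_lt_succ fun j hj => by simpa using hord (j + 1) (by omega) hj).monotoneOn
  have ht_nonneg : ∀ j ≤ k, 0 ≤ t j := fun j hj =>
    ht0 ▸ ht (Set.mem_Iic.2 (Nat.zero_le k)) (Set.mem_Iic.2 hj) (Nat.zero_le j)
  have hN : ∀ n : ℕ, MonotoneOn (fun j => ⌊(n : ℝ) * t j⌋₊) (Set.Iic k) := fun n _ hj _ hj' h =>
    Nat.floor_mono (mul_le_mul_of_nonneg_left (ht hj hj' h) n.cast_nonneg)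
  have hevent : ∀ n : ℕ, {ω | ∀ j ∈ Finset.Icc 1 k, ∀ i ∈ Finset.Icc 1 ⌊(n : ℝ) * t j⌋₊,
      X (i : ℤ) ω ≤ x j * a n} = ⋂ j ∈ Icc 1 k,
        blockMaxLe X (Ioc ⌊(n : ℝ) * t (j - 1)⌋₊ ⌊(n : ℝ) * t j⌋₊) (tailMin x k j * a n) :=
    fun n => setOf_forall_Icc_eq_iInter_blockMaxLe X k (by simp [ht0]) (hN n) x (hapos n).le
  simp_rw [hevent]
  refine tendsto_measureReal_iInter_blockMaxLe hmeas hstat hmix hα hrv hapos han hei k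
    (fun j n => ⌊(n : ℝ) * t j⌋₊) hN (fun j hj => ?_) (fun j hj => ?_) (fun j hj => ?_) <;>
    obtain ⟨hj1, hjk⟩ := Finset.mem_Icc.1 hj
  · exact sub_pos.2 (hord j hj1 hjk)
  · exact tendsto_natFloor_mul_sub_div (ht_nonneg _ (by omega))
      (ht (Set.mem_Iic.2 (by omega)) (Set.mem_Iic.2 hjk) (Nat.sub_le j 1))
  · exact tailMin_pos hjk fun l hjl hlk => hx l (hj1.trans hjl) hlk

/-- Finite-dimensional distributional convergence contained in Theorem 3.2: under
strict stationarity, strong mixing, regular variation and extremal index `θ = 1`, for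
times `0 = t_0 < t_1 < ⋯ < t_k ≤ 1` and levels `x_1, …, x_k > 0`,
`P(max_{1 ≤ i ≤ ⌊n t_j⌋} X_i ≤ x_j aₙ for all j) →
  ∏_{j=1}^k exp(−(t_j − t_{j−1}) (min_{j ≤ l ≤ k} x_l)^(−α))`. -/
theorem partial_maxima_fdd_convergence
    {Ω : Type*} [MeasurableSpace Ω] (P : Measure Ω) [IsProbabilityMeasure P]
    (X : ℤ → Ω → ℝ) (hmeas : ∀ i, Measurable (X i)) (hpos : ∀ i ω, 0 ≤ X i ω)
    (hstat : StrictStationaryZ P X) (hmix : StrongMixingZ P X)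
    (α : ℝ) (hα : 0 < α) (hrv : RegularlyVaryingRV P (X 1) α)
    (a : ℕ → ℝ) (hapos : ∀ n, 0 < a n)
    (han : Tendsto (fun n : ℕ => (n : ℝ) * (P {ω | a n < X 1 ω}).toReal) atTop (𝓝 1))
    (hei : ∀ u : ℝ, 0 < u →
      Tendsto (fun n : ℕ =>
          (P {ω | ∀ i ∈ Finset.Icc 1 n, X (i : ℤ) ω ≤ u * a n}).toReal)
        atTop (𝓝 (Real.exp (-u ^ (-α))))) :
    ∀ k : ℕ, 1 ≤ k → ∀ t x : ℕ → ℝ, t 0 = 0 →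
      (∀ j, 1 ≤ j → j ≤ k → t (j - 1) < t j) → t k ≤ 1 →
      (∀ j, 1 ≤ j → j ≤ k → 0 < x j) →
      Tendsto (fun n : ℕ =>
        (P {ω | ∀ j ∈ Finset.Icc 1 k, ∀ i ∈ Finset.Icc 1 ⌊(n : ℝ) * t j⌋₊,
            X (i : ℤ) ω ≤ x j * a n}).toReal)
        atTop
        (𝓝 (∏ j ∈ Finset.Icc 1 k,
          Real.exp (-(t j - t (j - 1)) *
            (sInf {y : ℝ | ∃ l : ℕ, j ≤ l ∧ l ≤ k ∧ y = x l}) ^ (-α)))) :=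
  partial_maxima_fdd_convergence_general P X hmeas hstat hmix α hα hrv a hapos han hei
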